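/- Assume 𝕜 contains a primitive d-th root of unity ξ. Then in Y_{d,n}(q), for all 1 ≤ a ≤ n−1 and all A ∈ SetPar_n: (a) g_a e(A) = e(σ_a A) g_a, and (b) g_a ē(A) = ē(σ_a A) g_a. -/

import Mathlib

open scoped Classical

noncomputable section

namespace YH

/-- Generators of the Yokonuma–Hecke algebra (0-based indexing):
`g a h` corresponds to the generator `g_{a+1}` of the paper, and `t a` to `t_{a+1}`. -/
inductive Gen (n : ℕ) : Type
  | g : (a : ℕ) → a + 1 < n → Gen n
  | t : Fin n → Gen n

variable (𝕜 : Type) [Field 𝕜] (d n : ℕ) (q : 𝕜)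

/-- The free algebra on the generators. -/
abbrev F : Type := FreeAlgebra 𝕜 (Gen n)

def G (a : ℕ) (h : a + 1 < n) : F 𝕜 n := FreeAlgebra.ι 𝕜 (Gen.g a h)

def T (a : Fin n) : F 𝕜 n := FreeAlgebra.ι 𝕜 (Gen.t a)

/-- The simple transposition `σ_a = (a, a+1)` (0-based). -/
def sw (a : ℕ) (h : a + 1 < n) : Equiv.Perm (Fin n) :=
  Equiv.swap ⟨a, by omega⟩ ⟨a + 1, h⟩

/-- The element `e_a = (1/d) Σ_{r=0}^{d-1} t_a^r t_{a+1}^{-r}` of the free algebra, where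
`t_{a+1}^{-r}` is represented by `t_{a+1}^{(d-r) % d}` (they agree once `t^d = 1` is imposed). -/
def Efree (a : ℕ) (h : a + 1 < n) : F 𝕜 n :=
  (d : 𝕜)⁻¹ • ∑ r ∈ Finset.range d,
    T 𝕜 n ⟨a, by omega⟩ ^ r * T 𝕜 n ⟨a + 1, h⟩ ^ ((d - r) % d)

/-- The defining relations of the Yokonuma–Hecke algebra `Y_{d,n}(q)`. -/
inductive Rel : F 𝕜 n → F 𝕜 n → Prop
  | torder (a : Fin n) : Rel (T 𝕜 n a ^ d) 1
  | tcomm (a b : Fin n) : Rel (T 𝕜 n a * T 𝕜 n b) (T 𝕜 n b * T 𝕜 n a)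
  | tg (a : Fin n) (b : ℕ) (hb : b + 1 < n) :
      Rel (T 𝕜 n a * G 𝕜 n b hb) (G 𝕜 n b hb * T 𝕜 n (sw n b hb a))
  | quad (a : ℕ) (h : a + 1 < n) :
      Rel (G 𝕜 n a h ^ 2)
        (algebraMap 𝕜 (F 𝕜 n) q + (q - 1) • (Efree 𝕜 d n a h * G 𝕜 n a h))
  | braid (a : ℕ) (h : a + 2 < n) :
      Rel (G 𝕜 n a (by omega) * G 𝕜 n (a + 1) h * G 𝕜 n a (by omega))
        (G 𝕜 n (a + 1) h * G 𝕜 n a (by omega) * G 𝕜 n (a + 1) h)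
  | gcomm (a b : ℕ) (ha : a + 1 < n) (hb : b + 1 < n) (hab : a + 1 < b) :
      Rel (G 𝕜 n a ha * G 𝕜 n b hb) (G 𝕜 n b hb * G 𝕜 n a ha)

/-- The Yokonuma–Hecke algebra `Y_{d,n}(q)`. -/
abbrev Y : Type := RingQuot (Rel 𝕜 d n q)

def π : F 𝕜 n →ₐ[𝕜] Y 𝕜 d n q := RingQuot.mkAlgHom 𝕜 (Rel 𝕜 d n q)

/-- The generator `g_{a+1}` of `Y_{d,n}(q)` (0-based: `g a h`). -/
def g (a : ℕ) (h : a + 1 < n) : Y 𝕜 d n q := π 𝕜 d n q (G 𝕜 n a h)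

/-- The generator `t_{a+1}` of `Y_{d,n}(q)` (0-based: `t a`). -/
def t (a : Fin n) : Y 𝕜 d n q := π 𝕜 d n q (T 𝕜 n a)

/-- The idempotent `e_a` in `Y_{d,n}(q)`. -/
def eA (a : ℕ) (h : a + 1 < n) : Y 𝕜 d n q := π 𝕜 d n q (Efree 𝕜 d n a h)

/-- `(1/d) Σ_{r=0}^{d-1} t_a^r t_b^{-r}` in `Y_{d,n}(q)`, with `t_b^{-r}` written
`t_b^{(d-r) % d}`. -/
def eabAux (a b : Fin n) : Y 𝕜 d n q :=
  (d : 𝕜)⁻¹ • ∑ r ∈ Finset.range d, t 𝕜 d n q a ^ r * t 𝕜 d n q b ^ ((d - r) % d)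

/-- The element `e_{ab}` (symmetrized so that `e_{ba} = e_{ab}`). -/
def eab (a b : Fin n) : Y 𝕜 d n q :=
  if (a : ℕ) ≤ (b : ℕ) then eabAux 𝕜 d n q a b else eabAux 𝕜 d n q b a

/-- Set partitions of `{1, …, n}` are identified with equivalence relations, i.e. with
`Setoid (Fin n)`; `a ∼_A b` is `A.r a b`. -/
abbrev SetPar (n : ℕ) := Setoid (Fin n)

/-- `e(A) = ∏_{a ∼_A b, a ≠ b} e_{ab}` (the factors commute, so the product may be
taken in any fixed order). -/
def eSet (A : Setoid (Fin n)) : Y 𝕜 d n q :=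
  (((List.finRange n) ×ˢ (List.finRange n)).map
    (fun p => if A.r p.1 p.2 ∧ p.1 ≠ p.2 then eab 𝕜 d n q p.1 p.2 else 1)).prod

/-- `e(j) = ∏_{a=1}^n ((1/d) Σ_{r=0}^{d-1} ξ^{-j_a r} t_a^r)` for `j ∈ (ℤ/dℤ)^n`. -/
def ej (ξ : 𝕜) (j : Fin n → ZMod d) : Y 𝕜 d n q :=
  ((List.finRange n).map (fun a =>
    (d : 𝕜)⁻¹ • ∑ r ∈ Finset.range d,
      ξ ^ (((-(j a)) * (r : ZMod d)).val) • t 𝕜 d n q a ^ r)).prod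

/-- `J_A = { j ∈ (ℤ/dℤ)^n : j_a = j_b ⇔ a ∼_A b }`. -/
def JA [NeZero d] (A : Setoid (Fin n)) : Finset (Fin n → ZMod d) :=
  Finset.univ.filter (fun j => ∀ a b : Fin n, j a = j b ↔ A.r a b)

/-- `ē(A) = Σ_{j ∈ J_A} e(j)`. -/
def ebar [NeZero d] (ξ : 𝕜) (A : Setoid (Fin n)) : Y 𝕜 d n q :=
  ∑ j ∈ JA d n A, ej 𝕜 d n q ξ j

/-- The Jucys–Murphy elements: `X 0 = X_1 = 1` and `X (a+1) = X_{a+2} = q⁻¹ g_{a+1} X_{a+1} g_{a+1}`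
(0-based indexing: `X a h` is the paper's `X_{a+1}`). -/
def X : (a : ℕ) → a < n → Y 𝕜 d n q
  | 0, _ => 1
  | a + 1, h => q⁻¹ • (g 𝕜 d n q a h * X a (by omega) * g 𝕜 d n q a h)

/-- The action of a permutation on set partitions (equivalence relations). -/
def permSetoid (σ : Equiv.Perm (Fin n)) (A : Setoid (Fin n)) : Setoid (Fin n) where
  r x y := A.r (σ.symm x) (σ.symm y)
  iseqv := ⟨fun _ => A.iseqv.refl _, fun h => A.iseqv.symm h, fun h h' => A.iseqv.trans h h'⟩

instance : Finite (Setoid (Fin n)) :=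
  Finite.of_injective (fun A : Setoid (Fin n) => A.r)
    (fun A B h => by cases A; cases B; simp only at h; subst h; rfl)

noncomputable instance : Fintype (Setoid (Fin n)) := Fintype.ofFinite _

end YH


namespace YH

section Aux

variable {𝕜 : Type} [Field 𝕜] {d n : ℕ} {q : 𝕜}

/-- pairwise from forall -/
theorem list_pairwise_of_forall {α : Type*} {R : α → α → Prop} (h : ∀ a b, R a b) :
    ∀ l : List α, l.Pairwise R
  | [] => List.Pairwise.nil
  | a :: l => List.Pairwise.cons (fun b _ => h a b) (list_pairwise_of_forall h l)

theorem t_comm (a b : Fin n) : t 𝕜 d n q a * t 𝕜 d n q b = t 𝕜 d n q b * t 𝕜 d n q a := by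
  have := RingQuot.mkAlgHom_rel 𝕜 (Rel.tcomm (𝕜 := 𝕜) (d := d) (n := n) (q := q) a b)
  simpa [t, π, map_mul] using this

theorem t_g (a : Fin n) (b : ℕ) (hb : b + 1 < n) :
    t 𝕜 d n q a * g 𝕜 d n q b hb = g 𝕜 d n q b hb * t 𝕜 d n q (sw n b hb a) := by
  have := RingQuot.mkAlgHom_rel 𝕜 (Rel.tg (𝕜 := 𝕜) (d := d) (n := n) (q := q) a b hb)
  simpa [t, g, π, map_mul] using this

theorem g_t (a : Fin n) (b : ℕ) (hb : b + 1 < n) :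
    g 𝕜 d n q b hb * t 𝕜 d n q a = t 𝕜 d n q (sw n b hb a) * g 𝕜 d n q b hb := by
  have := t_g (𝕜 := 𝕜) (d := d) (q := q) (sw n b hb a) b hb
  rw [show sw n b hb (sw n b hb a) = a from Equiv.swap_apply_self _ _ _] at this
  exact this.symm

theorem g_t_pow (a : Fin n) (b : ℕ) (hb : b + 1 < n) (k : ℕ) :
    g 𝕜 d n q b hb * t 𝕜 d n q a ^ k = t 𝕜 d n q (sw n b hb a) ^ k * g 𝕜 d n q b hb := by
  induction k with
  | zero => simp
  | succ k ih =>
    rw [pow_succ, ← mul_assoc, ih, mul_assoc, g_t, pow_succ, mul_assoc]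

/-- The commutative subalgebra generated by the `t`. -/
def TAdj : Subalgebra 𝕜 (Y 𝕜 d n q) := Algebra.adjoin 𝕜 (Set.range (t 𝕜 d n q))

theorem commute_t_of_mem (a : Fin n) {y : Y 𝕜 d n q} (hy : y ∈ TAdj (q := q)) :
    Commute (t 𝕜 d n q a) y := by
  induction hy using Algebra.adjoin_induction with
  | mem x hx => obtain ⟨b, rfl⟩ := hx; exact t_comm a b
  | algebraMap r => exact Algebra.commute_algebraMap_right r _
  | add x y _ _ hx hy => exact hx.add_right hy
  | mul x y _ _ hx hy => exact hx.mul_right hy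

theorem commute_of_mem {x y : Y 𝕜 d n q} (hx : x ∈ TAdj (q := q)) (hy : y ∈ TAdj (q := q)) :
    Commute x y := by
  induction hx using Algebra.adjoin_induction with
  | mem x hx => obtain ⟨b, rfl⟩ := hx; exact commute_t_of_mem b hy
  | algebraMap r => exact Algebra.commute_algebraMap_left r _
  | add x y _ _ hx hy => exact hx.add_left hy
  | mul x y _ _ hx hy => exact hx.mul_left hy

theorem t_mem (a : Fin n) : t 𝕜 d n q a ∈ TAdj (q := q) :=
  Algebra.subset_adjoin ⟨a, rfl⟩

theorem eabAux_mem (a b : Fin n) : eabAux 𝕜 d n q a b ∈ TAdj (q := q) := by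
  refine Subalgebra.smul_mem _ (Subalgebra.sum_mem _ fun r _ => ?_) _
  exact mul_mem (pow_mem (t_mem a) _) (pow_mem (t_mem b) _)

theorem eab_mem (a b : Fin n) : eab 𝕜 d n q a b ∈ TAdj (q := q) := by
  unfold eab; split <;> exact eabAux_mem _ _

theorem mod_invol {d r : ℕ} (hr : r < d) : (d - (d - r) % d) % d = r := by
  rcases Nat.eq_zero_or_pos r with rfl | hrpos
  · simp [Nat.mod_self]
  · rw [Nat.mod_eq_of_lt (show d - r < d by omega), Nat.sub_sub_self hr.le,
      Nat.mod_eq_of_lt hr]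

theorem eabAux_symm (a b : Fin n) : eabAux 𝕜 d n q a b = eabAux 𝕜 d n q b a := by
  unfold eabAux
  congr 1
  refine Finset.sum_nbij' (fun r => (d - r) % d) (fun r => (d - r) % d) ?_ ?_ ?_ ?_ ?_
  · intro r hr
    simp only [Finset.mem_range] at hr ⊢
    exact Nat.mod_lt _ (by omega)
  · intro r hr
    simp only [Finset.mem_range] at hr ⊢
    exact Nat.mod_lt _ (by omega)
  · intro r hr; exact mod_invol (Finset.mem_range.mp hr)
  · intro r hr; exact mod_invol (Finset.mem_range.mp hr)
  · intro r hr
    rw [mod_invol (Finset.mem_range.mp hr)]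
    exact Commute.pow_pow (show Commute (t 𝕜 d n q a) (t 𝕜 d n q b) from t_comm a b) _ _

theorem eab_eq_aux (a b : Fin n) : eab 𝕜 d n q a b = eabAux 𝕜 d n q a b := by
  unfold eab; split
  · rfl
  · exact (eabAux_symm b a)

theorem g_eabAux (a c : Fin n) (b : ℕ) (hb : b + 1 < n) :
    g 𝕜 d n q b hb * eabAux 𝕜 d n q a c
      = eabAux 𝕜 d n q (sw n b hb a) (sw n b hb c) * g 𝕜 d n q b hb := by
  unfold eabAux
  rw [mul_smul_comm, smul_mul_assoc, Finset.mul_sum, Finset.sum_mul]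
  congr 1
  refine Finset.sum_congr rfl fun r _ => ?_
  rw [← mul_assoc, g_t_pow, mul_assoc, g_t_pow, ← mul_assoc]

theorem g_eab (a c : Fin n) (b : ℕ) (hb : b + 1 < n) :
    g 𝕜 d n q b hb * eab 𝕜 d n q a c
      = eab 𝕜 d n q (sw n b hb a) (sw n b hb c) * g 𝕜 d n q b hb := by
  rw [eab_eq_aux, eab_eq_aux, g_eabAux]

theorem g_list_prod {α : Type*} (b : ℕ) (hb : b + 1 < n) (l : List α)
    (f f' : α → Y 𝕜 d n q)
    (hf : ∀ x ∈ l, g 𝕜 d n q b hb * f x = f' x * g 𝕜 d n q b hb) :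
    g 𝕜 d n q b hb * (l.map f).prod = (l.map f').prod * g 𝕜 d n q b hb := by
  induction l with
  | nil => simp
  | cons x l ih =>
    simp only [List.map_cons, List.prod_cons]
    rw [← mul_assoc, hf x List.mem_cons_self, mul_assoc,
      ih (fun y hy => hf y (List.mem_cons_of_mem _ hy)), ← mul_assoc]

theorem perm_map_prod (σ : Equiv.Perm (Fin n)) :
    ((List.finRange n).map σ).Perm (List.finRange n) := by
  refine List.perm_of_nodup_nodup_toFinset_eq
    ((List.nodup_finRange n).map σ.injective) (List.nodup_finRange n) ?_
  ext x
  simp only [List.mem_toFinset, List.mem_map, List.mem_finRange, true_and, iff_true]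
  exact ⟨σ.symm x, by simp⟩

theorem perm_map_prod2 (σ : Equiv.Perm (Fin n)) :
    ((((List.finRange n) ×ˢ (List.finRange n)).map (Prod.map σ σ)).Perm
      ((List.finRange n) ×ˢ (List.finRange n))) := by
  refine List.perm_of_nodup_nodup_toFinset_eq
    (((List.nodup_finRange n).product (List.nodup_finRange n)).map
      (σ.injective.prodMap σ.injective))
    ((List.nodup_finRange n).product (List.nodup_finRange n)) ?_
  ext p
  simp only [List.mem_toFinset]
  constructor
  · intro _
    exact List.mem_product.mpr ⟨List.mem_finRange _, List.mem_finRange _⟩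
  · intro _
    refine List.mem_map.mpr ⟨(σ.symm p.1, σ.symm p.2), ?_, ?_⟩
    · exact List.mem_product.mpr ⟨List.mem_finRange _, List.mem_finRange _⟩
    · show (σ (σ.symm p.1), σ (σ.symm p.2)) = p
      simp

theorem permSetoid_r (σ : Equiv.Perm (Fin n)) (A : Setoid (Fin n)) (x y : Fin n) :
    (permSetoid n σ A).r x y ↔ A.r (σ.symm x) (σ.symm y) := Iff.rfl

theorem sw_symm (a : ℕ) (h : a + 1 < n) : (sw n a h).symm = sw n a h :=
  Equiv.symm_swap _ _

/-- Part (a). -/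
theorem part_a (a : ℕ) (h : a + 1 < n) (A : Setoid (Fin n)) :
    g 𝕜 d n q a h * eSet 𝕜 d n q A
      = eSet 𝕜 d n q (permSetoid n (sw n a h) A) * g 𝕜 d n q a h := by
  classical
  set σ := sw n a h
  set B := permSetoid n σ A
  set F : Fin n × Fin n → Y 𝕜 d n q :=
    fun p => if B.r p.1 p.2 ∧ p.1 ≠ p.2 then eab 𝕜 d n q p.1 p.2 else 1 with hF
  have hFmem : ∀ p, F p ∈ TAdj (𝕜 := 𝕜) (d := d) (n := n) (q := q) := by
    intro p; rw [hF]; dsimp only; split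
    · exact eab_mem _ _
    · exact one_mem _
  have step1 : g 𝕜 d n q a h * eSet 𝕜 d n q A
      = ((((List.finRange n) ×ˢ (List.finRange n)).map (fun p => F (Prod.map σ σ p))).prod)
          * g 𝕜 d n q a h := by
    unfold eSet
    refine g_list_prod a h _ _ _ fun p _ => ?_
    by_cases hc : A.r p.1 p.2 ∧ p.1 ≠ p.2
    · have hB : B.r (σ p.1) (σ p.2) ∧ σ p.1 ≠ σ p.2 := by
        constructor
        · show A.r (σ.symm (σ p.1)) (σ.symm (σ p.2))
          simpa using hc.1
        · simpa [σ.injective.ne_iff] using hc.2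
      rw [if_pos hc,
        show F (Prod.map σ σ p) = eab 𝕜 d n q (σ p.1) (σ p.2) from if_pos hB]
      exact g_eab _ _ _ _
    · have hB : ¬(B.r (σ p.1) (σ p.2) ∧ σ p.1 ≠ σ p.2) := by
        rw [not_and_or] at hc ⊢
        rcases hc with hc | hc
        · left; show ¬ A.r (σ.symm (σ p.1)) (σ.symm (σ p.2)); simpa using hc
        · right; simpa [σ.injective.ne_iff] using hc
      rw [if_neg hc, show F (Prod.map σ σ p) = 1 from if_neg hB, mul_one, one_mul]
  rw [step1]
  congr 1
  have : (((List.finRange n) ×ˢ (List.finRange n)).map (fun p => F (Prod.map σ σ p)))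
      = ((((List.finRange n) ×ˢ (List.finRange n)).map (Prod.map σ σ)).map F) := by
    rw [List.map_map]; rfl
  rw [this]
  refine List.Perm.prod_eq' (((perm_map_prod2 σ).map F).symm).symm ?_
  · refine list_pairwise_of_forall ?_ _ |>.map F (fun x y hxy => hxy)
    intro x y
    exact commute_of_mem (hFmem x) (hFmem y)

theorem ej_factor_mem (ξ : 𝕜) (c : ZMod d) (a : Fin n) :
    ((d : 𝕜)⁻¹ • ∑ r ∈ Finset.range d,
      ξ ^ (((-c) * (r : ZMod d)).val) • t 𝕜 d n q a ^ r) ∈ TAdj (q := q) := by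
  refine Subalgebra.smul_mem _ (Subalgebra.sum_mem _ fun r _ => ?_) _
  exact Subalgebra.smul_mem _ (pow_mem (t_mem a) _) _

theorem g_ej_factor (ξ : 𝕜) (c : ZMod d) (a : Fin n) (b : ℕ) (hb : b + 1 < n) :
    g 𝕜 d n q b hb * ((d : 𝕜)⁻¹ • ∑ r ∈ Finset.range d,
        ξ ^ (((-c) * (r : ZMod d)).val) • t 𝕜 d n q a ^ r)
      = ((d : 𝕜)⁻¹ • ∑ r ∈ Finset.range d,
        ξ ^ (((-c) * (r : ZMod d)).val) • t 𝕜 d n q (sw n b hb a) ^ r) * g 𝕜 d n q b hb := by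
  rw [mul_smul_comm, smul_mul_assoc, Finset.mul_sum, Finset.sum_mul]
  congr 1
  refine Finset.sum_congr rfl fun r _ => ?_
  rw [mul_smul_comm, smul_mul_assoc, g_t_pow]

theorem g_ej (ξ : 𝕜) (j : Fin n → ZMod d) (b : ℕ) (hb : b + 1 < n) :
    g 𝕜 d n q b hb * ej 𝕜 d n q ξ j
      = ej 𝕜 d n q ξ (j ∘ (sw n b hb)) * g 𝕜 d n q b hb := by
  classical
  set σ := sw n b hb
  set f : Fin n → Y 𝕜 d n q := fun a =>
    (d : 𝕜)⁻¹ • ∑ r ∈ Finset.range d,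
      ξ ^ (((-(j (σ a))) * (r : ZMod d)).val) • t 𝕜 d n q a ^ r with hf
  have step1 : g 𝕜 d n q b hb * ej 𝕜 d n q ξ j
      = ((List.finRange n).map (fun a => f (σ a))).prod * g 𝕜 d n q b hb := by
    unfold ej
    refine g_list_prod b hb _ _ _ fun x _ => ?_
    have := g_ej_factor (𝕜 := 𝕜) (d := d) (n := n) (q := q) ξ (j x) x b hb
    rw [this, hf]
    dsimp only
    rw [show σ (σ x) = x from Equiv.swap_apply_self _ _ _]
  rw [step1]
  congr 1
  have h1 : ((List.finRange n).map (fun a => f (σ a)))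
      = (((List.finRange n).map σ).map f) := by rw [List.map_map]; rfl
  rw [h1]
  refine List.Perm.prod_eq' (((perm_map_prod σ).map f)) ?_
  refine list_pairwise_of_forall ?_ _ |>.map f (fun x y hxy => hxy)
  intro x y
  exact commute_of_mem (ej_factor_mem _ _ _) (ej_factor_mem _ _ _)

theorem part_b [NeZero d] (ξ : 𝕜) (a : ℕ) (h : a + 1 < n) (A : Setoid (Fin n)) :
    g 𝕜 d n q a h * ebar 𝕜 d n q ξ A
      = ebar 𝕜 d n q ξ (permSetoid n (sw n a h) A) * g 𝕜 d n q a h := by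
  classical
  set σ := sw n a h
  unfold ebar
  rw [Finset.mul_sum, Finset.sum_mul]
  refine Finset.sum_nbij' (fun j => j ∘ σ) (fun j => j ∘ σ) ?_ ?_ ?_ ?_ ?_
  · intro j hj
    simp only [JA, Finset.mem_filter, Finset.mem_univ, true_and] at hj ⊢
    intro x y
    simp only [Function.comp_apply]
    rw [hj (σ x) (σ y)]
    show A.r (σ x) (σ y) ↔ A.r (σ.symm x) (σ.symm y)
    rw [show σ.symm = σ from Equiv.symm_swap _ _]
  · intro j hj
    simp only [JA, Finset.mem_filter, Finset.mem_univ, true_and] at hj ⊢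
    intro x y
    simp only [Function.comp_apply]
    rw [hj (σ x) (σ y)]
    show A.r (σ.symm (σ x)) (σ.symm (σ y)) ↔ A.r x y
    simp
  · intro j _; funext x; simp [Function.comp, show σ (σ x) = x from Equiv.swap_apply_self _ _ _]
  · intro j _; funext x; simp [Function.comp, show σ (σ x) = x from Equiv.swap_apply_self _ _ _]
  · intro j _
    exact g_ej ξ j a h

end Aux

end YH

open YH in
/-- if `𝕜` contains a primitive `d`-th root of unity `ξ`, then in `Y_{d,n}(q)`,
for all `a` (with `σ_a = (a, a+1)`, 0-based) and all set partitions `A`: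
(a) `g_a e(A) = e(σ_a A) g_a`, and (b) `g_a ē(A) = ē(σ_a A) g_a`. -/
theorem statement6 (𝕜 : Type) [Field 𝕜] (d n : ℕ) [NeZero d] (hn : 0 < n)
    (hdk : (d : 𝕜) ≠ 0) (q : 𝕜) (hq0 : q ≠ 0) (hq1 : q ≠ 1)
    (ξ : 𝕜) (hξ : IsPrimitiveRoot ξ d) :
    ∀ (a : ℕ) (h : a + 1 < n) (A : Setoid (Fin n)),
      (g 𝕜 d n q a h * eSet 𝕜 d n q A
        = eSet 𝕜 d n q (permSetoid n (sw n a h) A) * g 𝕜 d n q a h)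
      ∧ (g 𝕜 d n q a h * ebar 𝕜 d n q ξ A
        = ebar 𝕜 d n q ξ (permSetoid n (sw n a h) A) * g 𝕜 d n q a h) := by
  intro a h A
  exact ⟨YH.part_a a h A, YH.part_b ξ a h A⟩

end
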